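/- Suppose ν²+λ² ≠ 1 and let x_* := −2λν/(λ²+ν²−1). Then W̃(x_*) = (λν(λ−ν−1)(λ−ν+1)(λ+ν−1)(λ+ν+1)/(λ²+ν²−1)²)². In particular W̃(x_*) ≥ 0, with W̃(x_*) = 0 for admissible (ν,λ) (0<ν<1, 2√ν ≤ λ < 1+ν) if and only if λ+ν = 1. -/

import Mathlib

noncomputable def Wt (v l x : ℝ) : ℝ :=
  v*((x^2 - 1)^2*v*l^2 + x*(l^2 + 2*x*l - v^2 + 1)*(2*l*v + x*(l^2 + v^2 - 1)))

theorem Wt_at_pole {v l : ℝ} (hd : l^2 + v^2 - 1 ≠ 0) :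
    Wt v l (-2*l*v/(l^2 + v^2 - 1))
      = (l*v*(l - v - 1)*(l - v + 1)*(l + v - 1)*(l + v + 1)/(l^2 + v^2 - 1)^2)^2 := by
  unfold Wt
  field_simp
  ring

theorem pole_numerator_eq_zero_iff {v l : ℝ} (hv : 0 < v) (hv₁ : v < 1) (hl : 0 < l)
    (hlv : l < 1 + v) :
    l*v*(l - v - 1)*(l - v + 1)*(l + v - 1)*(l + v + 1) = 0 ↔ l + v = 1 := by
  have h₁ : l - v - 1 ≠ 0 := by linarith
  have h₂ : l - v + 1 ≠ 0 := by linarith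
  have h₃ : l + v + 1 ≠ 0 := by linarith
  simp only [mul_eq_zero, hl.ne', hv.ne', h₁, h₂, h₃, false_or, or_false, sub_eq_zero]

theorem stmt17 (v l : ℝ) (h : v^2 + l^2 ≠ 1) :
    Wt v l (-2*l*v/(l^2 + v^2 - 1))
      = (l*v*(l - v - 1)*(l - v + 1)*(l + v - 1)*(l + v + 1)/(l^2 + v^2 - 1)^2)^2 ∧
    0 ≤ Wt v l (-2*l*v/(l^2 + v^2 - 1)) ∧
    (0 < v → v < 1 → 2*Real.sqrt v ≤ l → l < 1 + v →
      (Wt v l (-2*l*v/(l^2 + v^2 - 1)) = 0 ↔ l + v = 1)) := by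
  have hd : l^2 + v^2 - 1 ≠ 0 := by
    contrapose! h
    linarith
  rw [Wt_at_pole hd]
  refine ⟨rfl, sq_nonneg _, fun hv hv₁ hl hlv => ?_⟩
  have hl₀ : 0 < l := (by positivity : 0 < 2 * Real.sqrt v).trans_le hl
  rw [sq_eq_zero_iff, div_eq_zero_iff, or_iff_left (pow_ne_zero 2 hd)]
  exact pole_numerator_eq_zero_iff hv hv₁ hl₀ hlv
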